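/- Let S_u be a vector of generator matrices indexed by a subset u of cardinality at least 2. Then ρ(S_u) = min( ρ̃(S_u), min over j in u of ρ(S_{u\{j}}) ), where ρ̃ is the partial linear independence parameter defined using only strictly positive row counts. -/

import Mathlib

/-- The composition matrix formed by stacking the first `a j` rows of each `S j`. -/
def compMat {s k : ℕ} {F : Type*} [Field F] (S : Fin s → Matrix (Fin k) (Fin k) F)
    (a : Fin s → ℕ) : Matrix ((j : Fin s) × Fin (a j)) (Fin k) F :=
  fun p ℓ => if h : (p.2 : ℕ) < k then S p.1 ⟨p.2, h⟩ ℓ else 0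

/-- The linear independence parameter of the projection of the net onto the
coordinates in `u`: the largest `q ≤ k` such that every composition matrix built
from non-negative row counts supported on `u` and summing to `q` has full rank `q`. -/
noncomputable def rho {s k : ℕ} {F : Type*} [Field F] (S : Fin s → Matrix (Fin k) (Fin k) F)
    (u : Finset (Fin s)) : ℕ :=
  sSup {q | q ≤ k ∧ ∀ a : Fin s → ℕ, (∀ j ∉ u, a j = 0) → (∑ j, a j) = q →
    (compMat S a).rank = q}

/-- The partial linear independence parameter: the largest `q ≥ |u|` such that every
composition matrix built from strictly positive row counts supported on `u` and summing
to `q` has full rank `q`; by convention `|u| - 1` if no such `q` exists. -/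
noncomputable def rhoTilde {s k : ℕ} {F : Type*} [Field F] (S : Fin s → Matrix (Fin k) (Fin k) F)
    (u : Finset (Fin s)) : ℕ :=
  sSup (insert (u.card - 1) {q | u.card ≤ q ∧ ∀ a : Fin s → ℕ, (∀ j ∉ u, a j = 0) →
    (∀ j ∈ u, 0 < a j) → (∑ j, a j) = q → (compMat S a).rank = q})

/-!
Full rank of a composition matrix means its rows are linearly independent, and the rows
for counts `a ≤ b` are a subfamily of those for `b`; so full rank passes from a count
vector to any smaller one. Every count vector summing to `m` lies below one summing to
`r ≥ m` with the same support (enlarge a nonzero entry), so `m ≤ rho S u` and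
`m ≤ rhoTilde S u` are each equivalent to full rank of all count vectors of sum exactly `m`.
A count vector supported on `u` is either positive on all of `u` or supported on some
`u \ {j}`, and the recurrence is the resulting splitting of the condition for `rho S u`.
-/

theorem forall_supported_iff {ι : Type*} [DecidableEq ι] (u : Finset ι) (P : (ι → ℕ) → Prop) :
    (∀ a : ι → ℕ, (∀ j ∉ u, a j = 0) → P a) ↔
      (∀ a : ι → ℕ, (∀ j ∉ u, a j = 0) → (∀ j ∈ u, 0 < a j) → P a) ∧
        ∀ j ∈ u, ∀ a : ι → ℕ, (∀ i ∉ u.erase j, a i = 0) → P a := by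
  refine ⟨fun h => ⟨fun a ha _ => h a ha, fun j _ a ha => h a fun i hi => ha i ?_⟩, ?_⟩
  · exact fun hi' => hi (Finset.mem_of_mem_erase hi')
  rintro ⟨hpos, herase⟩ a ha
  by_cases h : ∀ j ∈ u, 0 < a j
  · exact hpos a ha h
  obtain ⟨j, hj, haj⟩ := not_forall₂.mp h
  refine herase j hj a fun i hi => ?_
  rcases eq_or_ne i j with rfl | hij
  · exact Nat.eq_zero_of_not_pos haj
  · exact ha i fun hiu => hi (Finset.mem_erase_of_ne_of_mem hij hiu)

theorem exists_pos_sum_eq {ι : Type*} [Fintype ι] [DecidableEq ι] {u : Finset ι}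
    (hu : u.Nonempty) {q : ℕ} (hq : u.card ≤ q) :
    ∃ a : ι → ℕ, (∀ j ∉ u, a j = 0) ∧ (∀ j ∈ u, 0 < a j) ∧ ∑ j, a j = q := by
  obtain ⟨j₀, hj₀⟩ := hu
  refine ⟨fun j => (if j ∈ u then 1 else 0) + (Pi.single j₀ (q - u.card) : ι → ℕ) j,
    fun j hj => ?_, fun j hj => by simp [hj], ?_⟩
  · simp [hj, show j ≠ j₀ from fun h => hj (h ▸ hj₀)]
  · simp only [Finset.sum_add_distrib, Finset.sum_boole, Finset.sum_pi_single',
      Finset.mem_univ, if_true, Finset.filter_mem_eq_inter, Finset.univ_inter, Nat.cast_id]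
    omega

section

variable {s k : ℕ} {F : Type*} [Field F] (S : Fin s → Matrix (Fin k) (Fin k) F)

theorem rank_compMat_le_sum (a : Fin s → ℕ) : (compMat S a).rank ≤ ∑ j, a j := by
  simpa [Fintype.card_sigma] using (compMat S a).rank_le_card_height

theorem rank_compMat_eq_sum_iff (a : Fin s → ℕ) :
    (compMat S a).rank = ∑ j, a j ↔ LinearIndependent F (compMat S a).row := by
  rw [Matrix.rank_eq_finrank_span_row, linearIndependent_iff_card_eq_finrank_span,
    Fintype.card_sigma, Set.finrank]
  simp only [Fintype.card_fin, eq_comm]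

theorem LinearIndependent.compMat_of_le {a b : Fin s → ℕ} (hab : a ≤ b)
    (h : LinearIndependent F (compMat S b).row) : LinearIndependent F (compMat S a).row :=
  h.comp (Sigma.map id fun j => Fin.castLE (hab j))
    (Function.injective_id.sigma_map fun j => Fin.castLE_injective (hab j))

theorem rank_compMat_eq_of_forall_le {u : Finset (Fin s)} {a : Fin s → ℕ} {m r : ℕ}
    (hmr : m ≤ r) (ha : ∀ j ∉ u, a j = 0) (hsum : ∑ j, a j = m)
    (hr : ∀ b : Fin s → ℕ, (∀ j ∉ u, b j = 0) → a ≤ b → ∑ j, b j = r →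
      (compMat S b).rank = r) :
    (compMat S a).rank = m := by
  rcases eq_or_ne m 0 with rfl | hm
  · simpa [hsum] using rank_compMat_le_sum S a
  obtain ⟨j, -, hj⟩ := Finset.exists_ne_zero_of_sum_ne_zero (hsum.trans_ne hm)
  have hju : j ∈ u := by_contra fun h => hj (ha j h)
  set b := a + Pi.single j (r - m)
  have hbsum : ∑ i, b i = r := by
    simp only [b, Pi.add_apply, Finset.sum_add_distrib, hsum, Finset.sum_pi_single',
      Finset.mem_univ, if_true]
    omega
  have hb : (compMat S b).rank = ∑ i, b i := by
    refine (hr b (fun i hi => ?_) le_self_add hbsum).trans hbsum.symm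
    simp [b, ha i hi, show i ≠ j from fun h => hi (h ▸ hju)]
  rw [← hsum, rank_compMat_eq_sum_iff]
  exact ((rank_compMat_eq_sum_iff S b).mp hb).compMat_of_le S le_self_add

theorem le_rho_iff (u : Finset (Fin s)) {m : ℕ} :
    m ≤ rho S u ↔ m ≤ k ∧ ∀ a : Fin s → ℕ, (∀ j ∉ u, a j = 0) → ∑ j, a j = m →
      (compMat S a).rank = m := by
  have hbdd : BddAbove {q | q ≤ k ∧ ∀ a : Fin s → ℕ, (∀ j ∉ u, a j = 0) →
      ∑ j, a j = q → (compMat S a).rank = q} := ⟨k, fun _ hq => hq.1⟩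
  refine ⟨fun hm => ?_, fun h => le_csSup hbdd h⟩
  have hzero : 0 ∈ {q | q ≤ k ∧ ∀ a : Fin s → ℕ, (∀ j ∉ u, a j = 0) →
      ∑ j, a j = q → (compMat S a).rank = q} :=
    ⟨Nat.zero_le _, fun a _ hsum => Nat.le_zero.mp (hsum ▸ rank_compMat_le_sum S a)⟩
  obtain ⟨hk, hrho⟩ := Nat.sSup_mem ⟨0, hzero⟩ hbdd
  exact ⟨hm.trans hk, fun a ha hsum =>
    rank_compMat_eq_of_forall_le S hm ha hsum fun b hb _ hbsum => hrho b hb hbsum⟩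

theorem le_rhoTilde_iff {u : Finset (Fin s)} (hu : u.Nonempty) {m : ℕ} :
    m ≤ rhoTilde S u ↔ ∀ a : Fin s → ℕ, (∀ j ∉ u, a j = 0) → (∀ j ∈ u, 0 < a j) →
      ∑ j, a j = m → (compMat S a).rank = m := by
  have hbdd : BddAbove (insert (u.card - 1) {q | u.card ≤ q ∧ ∀ a : Fin s → ℕ,
      (∀ j ∉ u, a j = 0) → (∀ j ∈ u, 0 < a j) → ∑ j, a j = q →
      (compMat S a).rank = q}) := by
    refine ⟨max (u.card - 1) k, ?_⟩
    rintro q (rfl | ⟨hq, hrank⟩)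
    · exact le_max_left _ _
    · obtain ⟨a, ha, hpos, hsum⟩ := exists_pos_sum_eq hu hq
      have := hrank a ha hpos hsum ▸ (compMat S a).rank_le_card_width
      simp_all
  have hcard : 0 < u.card := hu.card_pos
  constructor
  · intro hm a ha hpos hsum
    have hcard_le : u.card ≤ m := by
      calc u.card = ∑ _j ∈ u, 1 := by simp
        _ ≤ ∑ j ∈ u, a j := Finset.sum_le_sum hpos
        _ ≤ ∑ j, a j := Finset.sum_le_sum_of_subset u.subset_univ
        _ = m := hsum
    obtain h | ⟨-, hrank⟩ := Nat.sSup_mem (Set.insert_nonempty _ _) hbdd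
    · exact absurd (h ▸ hm : m ≤ u.card - 1) (by omega)
    · exact rank_compMat_eq_of_forall_le S hm ha hsum fun b hb hab hbsum =>
        hrank b hb (fun j hj => (hpos j hj).trans_le (hab j)) hbsum
  · intro h
    by_cases hm : u.card ≤ m
    · exact le_csSup hbdd (Set.mem_insert_of_mem _ ⟨hm, h⟩)
    · exact (Nat.le_sub_one_of_lt (not_le.mp hm)).trans (le_csSup hbdd (Set.mem_insert _ _))

end

/-- Dynamic programming recurrence: for `|u| ≥ 2`,
`ρ(S_u) = min(ρ̃(S_u), min_{j ∈ u} ρ(S_{u \ {j}}))`. -/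
theorem rho_eq_min_rhoTilde {s k : ℕ} {F : Type*} [Field F]
    (S : Fin s → Matrix (Fin k) (Fin k) F) (u : Finset (Fin s)) (hu : 2 ≤ u.card) :
    rho S u = min (rhoTilde S u)
      (u.inf' (Finset.card_pos.mp (by omega)) (fun j => rho S (u.erase j))) := by
  have hne : u.Nonempty := Finset.card_pos.mp (by omega)
  refine eq_of_forall_le_iff fun m => ?_
  simp only [le_min_iff, Finset.le_inf'_iff, le_rho_iff, le_rhoTilde_iff S hne, forall₂_and,
    hne.forall_const]
  rw [forall_supported_iff u (fun a => ∑ j, a j = m → (compMat S a).rank = m)]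
  tauto
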